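/- arXiv:math/0205084 — 2 statements merged into one kernel-verified Lean document; each statement's English description precedes it below -/
import Mathlib

section
/- For the generalized quaternion group Q_ℓ with ℓ = 2^j ≥ 16, the class function Θ₁ (equal to ℓ/4 at ±I, equal to −2 at elements ξ^{2i}J, and 0 elsewhere) equals the virtual character κ₂ + κ₃ + Σ_{1 ≤ i < ℓ/8} (−1)^i γ_{2i}; in particular Θ₁ is the character of a virtual representation of virtual dimension 0. -/
open Complex Matrix

/-- primitive (2n)-th root of unity ζ = e^{2πi/(2n)} = e^{4πi/ℓ} for ℓ = 4n. -/
noncomputable def zeta (n : ℕ) : ℂ := Complex.exp (2 * Real.pi * Complex.I / (2 * n))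

/-- The 2-dimensional representation γ_u of the generalized quaternion group,
with γ_u(ξ) = diag(ζ^u, ζ^{-u}) and γ_u(J) = [[0,(-1)^u],[1,0]];
here `a i` = ξ^i and `xa i` = J ξ^i. -/
noncomputable def gam (n : ℕ) (u : ℤ) : QuaternionGroup n → Matrix (Fin 2) (Fin 2) ℂ
  | .a i => !![zeta n ^ (u * (i.val : ℤ)), 0; 0, zeta n ^ (-(u * (i.val : ℤ)))]
  | .xa i => !![0, (-1 : ℂ) ^ u * zeta n ^ (-(u * (i.val : ℤ))); zeta n ^ (u * (i.val : ℤ)), 0]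

/-- character of γ_u -/
noncomputable def chi (n : ℕ) (u : ℤ) (g : QuaternionGroup n) : ℂ := Matrix.trace (gam n u g)

/-- κ₁ : ξ ↦ -1, J ↦ 1 -/
def kappa1 (n : ℕ) : QuaternionGroup n → ℂ
  | .a i => (-1) ^ i.val
  | .xa i => (-1) ^ i.val

/-- κ₂ : ξ ↦ 1, J ↦ -1 -/
def kappa2 (n : ℕ) : QuaternionGroup n → ℂ
  | .a _ => 1
  | .xa _ => -1

/-- κ₃ : ξ ↦ -1, J ↦ -1 -/
def kappa3 (n : ℕ) : QuaternionGroup n → ℂ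
  | .a i => (-1) ^ i.val
  | .xa i => -(-1) ^ i.val

/-- Θ₁ : value ℓ/4 = n at ±I = ξ^{±n/2}, value -2 at ξ^{2i}J, 0 otherwise. -/
def Theta1 (n : ℕ) : QuaternionGroup n → ℂ
  | .a i => if i = ((n / 2 : ℕ) : ZMod (2 * n)) ∨ i = -((n / 2 : ℕ) : ZMod (2 * n)) then (n : ℂ) else 0
  | .xa i => if Even i.val then -2 else 0

/-- Θ₂ : value ℓ/4 = n at ±I, value -2 at ξ^{2i+1}J, 0 otherwise. -/
def Theta2 (n : ℕ) : QuaternionGroup n → ℂ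
  | .a i => if i = ((n / 2 : ℕ) : ZMod (2 * n)) ∨ i = -((n / 2 : ℕ) : ZMod (2 * n)) then (n : ℂ) else 0
  | .xa i => if Even i.val then 0 else -2

/-- Δ(g) = det(I₂ - γ₁(g)) -/
noncomputable def Del (n : ℕ) (g : QuaternionGroup n) : ℂ := Matrix.det (1 - gam n 1 g)

/-!
On the rotations `ξ^c`, put `t = ζ^(2c + n)`, an `n`-th root of unity; since `(-1)^k = ζ^(nk)`,
the summand `(-1)^k γ_{2k}(ξ^c)` is `t^k + t^(-k)`. Hence the sum over `1 ≤ k < n/2` is the full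
geometric sum `∑_{k<n} t^k` (which is `n` or `0` according as `t = 1` or not) minus
`1 + t^(n/2) = 1 + (-1)^c`, and the latter is cancelled exactly by `κ₂ + κ₃`. Finally `t = 1`
exactly at `ξ^(±n/2) = ±I`. On the reflections every `γ_u` has trace `0`.
-/

open Finset

section RootsOfUnity

variable {K : Type*} [Field K]

theorem geom_sum_eq_ite_of_pow_eq_one [DecidableEq K] {t : K} {n : ℕ} (ht : t ^ n = 1) :
    ∑ k ∈ range n, t ^ k = if t = 1 then (n : K) else 0 := by
  split_ifs with h
  · simp [h]
  · rw [geom_sum_eq h, ht, sub_self, zero_div]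

theorem inv_pow_eq_pow_sub_of_pow_eq_one {t : K} {n k : ℕ} (ht : t ^ n = 1) (hk : k ≤ n) :
    t⁻¹ ^ k = t ^ (n - k) := by
  rw [inv_pow, inv_eq_iff_eq_inv, eq_comm]
  refine inv_eq_of_mul_eq_one_right ?_
  rw [← pow_add, Nat.sub_add_cancel hk, ht]

theorem sum_Ico_pow_add_inv_pow_of_pow_eq_one [DecidableEq K] {t : K} {m : ℕ} (hm : 0 < m)
    (ht : t ^ (2 * m) = 1) :
    ∑ k ∈ Ico 1 m, (t ^ k + t⁻¹ ^ k) = (if t = 1 then ((2 * m : ℕ) : K) else 0) - 1 - t ^ m := by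
  have hreflect : ∑ k ∈ Ico 1 m, t⁻¹ ^ k = ∑ k ∈ Ico (m + 1) (2 * m), t ^ k := by
    rw [sum_congr rfl fun k hk => inv_pow_eq_pow_sub_of_pow_eq_one ht (by simp at hk; omega),
      sum_Ico_reflect (fun k => t ^ k) 1 (by omega)]
    congr 2; omega
  rw [← geom_sum_eq_ite_of_pow_eq_one ht, sum_add_distrib, hreflect, range_eq_Ico,
    ← sum_Ico_consecutive _ (zero_le_one) (by omega : 1 ≤ 2 * m),
    ← sum_Ico_consecutive _ (by omega : 1 ≤ m) (by omega : m ≤ 2 * m),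
    ← sum_Ico_consecutive _ (by omega : m ≤ m + 1) (by omega : m + 1 ≤ 2 * m)]
  simp only [Nat.Ico_zero_eq_range, range_one, sum_singleton, pow_zero, Nat.Ico_succ_singleton]
  ring

end RootsOfUnity

section QuaternionCharacters

variable {n : ℕ}

theorem isPrimitiveRoot_zeta (hn : 0 < n) : IsPrimitiveRoot (zeta n) (2 * n) := by
  have := Complex.isPrimitiveRoot_exp (2 * n) (by omega)
  rwa [Nat.cast_mul, Nat.cast_ofNat] at this

theorem zeta_pow_self (hn : 0 < n) : zeta n ^ n = -1 := by
  have hne : (n : ℂ) ≠ 0 := Nat.cast_ne_zero.2 hn.ne'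
  rw [zeta, ← Complex.exp_nat_mul,
    show (n : ℂ) * (2 * Real.pi * Complex.I / (2 * n)) = Real.pi * Complex.I by field_simp]
  exact Complex.exp_pi_mul_I

theorem chi_xa (u : ℤ) (i : ZMod (2 * n)) : chi n u (.xa i) = 0 := by
  simp [chi, gam, Matrix.trace_fin_two_of]

theorem neg_one_pow_mul_chi_two_mul_a (hn : 0 < n) (k : ℕ) (i : ZMod (2 * n)) :
    (-1 : ℂ) ^ k * chi n (2 * k) (.a i) =
      (zeta n ^ (2 * i.val + n)) ^ k + (zeta n ^ (2 * i.val + n))⁻¹ ^ k := by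
  have hpow : (zeta n ^ (2 * i.val + n)) ^ k = (-1) ^ k * zeta n ^ (2 * k * i.val) := by
    rw [← zeta_pow_self hn, ← pow_mul, ← pow_mul, ← pow_add]
    ring_nf
  simp only [chi, gam, Matrix.trace_fin_two_of]
  rw [show (2 * k : ℤ) * i.val = ((2 * k * i.val : ℕ) : ℤ) by push_cast; ring, _root_.zpow_neg,
    zpow_natCast, inv_pow, hpow, mul_inv, ← inv_pow (-1 : ℂ), inv_neg_one]
  ring

theorem zeta_pow_pow_half (hn : 0 < n) (he : Even n) (c : ℕ) :
    (zeta n ^ (2 * c + n)) ^ (n / 2) = (-1) ^ (c + n / 2) := by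
  rw [← zeta_pow_self hn, ← pow_mul, ← pow_mul]
  congr 1
  obtain ⟨h, rfl⟩ := he
  rw [← two_mul, Nat.mul_div_cancel_left _ two_pos]
  ring

theorem zeta_pow_eq_one_iff (hn : 0 < n) (he : Even n) (i : ZMod (2 * n)) :
    zeta n ^ (2 * i.val + n) = 1 ↔
      i = ((n / 2 : ℕ) : ZMod (2 * n)) ∨ i = -((n / 2 : ℕ) : ZMod (2 * n)) := by
  have : NeZero (2 * n) := ⟨by omega⟩
  have hhalf : ((n / 2 : ℕ) : ZMod (2 * n)).val = n / 2 := ZMod.val_cast_of_lt (by omega)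
  have hhalf0 : ((n / 2 : ℕ) : ZMod (2 * n)) ≠ 0 := by
    intro h; rw [h, ZMod.val_zero] at hhalf; obtain ⟨h, rfl⟩ := he; omega
  rw [(isPrimitiveRoot_zeta hn).pow_eq_one_iff_dvd, ← ZMod.val_injective _ |>.eq_iff,
    ← ZMod.val_injective _ |>.eq_iff, ZMod.neg_val, if_neg hhalf0, hhalf]
  have hc := i.val_lt
  obtain ⟨h, rfl⟩ := he
  constructor
  · rintro ⟨k, hk⟩
    have hk3 : k < 3 := by nlinarith
    interval_cases k <;> omega
  · rintro (hi | hi)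
    · exact ⟨1, by omega⟩
    · exact ⟨2, by omega⟩

end QuaternionCharacters

/-- For ℓ = 2^j ≥ 16, Θ₁ = κ₂ + κ₃ + Σ_{1 ≤ i < ℓ/8} (-1)^i γ_{2i} as class functions
(in particular Θ₁ is a virtual character of virtual dimension Θ₁(1) = 0). -/
theorem stmt6 (j n : ℕ) (hj : 4 ≤ j) (hn : 4 * n = 2 ^ j) (g : QuaternionGroup n) :
    Theta1 n g = kappa2 n g + kappa3 n g +
      ∑ i ∈ Finset.Ico 1 (n / 2), (-1 : ℂ) ^ i * chi n (2 * i) g := by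
  have h16 : 16 ∣ 4 * n := hn ▸ pow_dvd_pow 2 hj
  have hpos : 0 < 2 ^ j := by positivity
  have hn0 : 0 < n := by omega
  have he : Even n := by rw [even_iff_two_dvd]; omega
  cases g with
  | xa i =>
    simp only [Theta1, kappa2, kappa3, chi_xa, mul_zero, sum_const_zero, add_zero]
    rcases Nat.even_or_odd i.val with h | h
    · rw [if_pos h, h.neg_one_pow]; ring
    · rw [if_neg (Nat.not_even_iff_odd.mpr h), h.neg_one_pow]; ring
  | a i =>
    set t := zeta n ^ (2 * i.val + n)
    have ht_half : t ^ (n / 2) = (-1) ^ i.val := by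
      rw [zeta_pow_pow_half hn0 he, pow_add, (show Even (n / 2) by
        rw [even_iff_two_dvd]; omega).neg_one_pow, mul_one]
    have ht : t ^ (2 * (n / 2)) = 1 := by
      rw [pow_mul', ht_half, ← pow_mul, pow_mul', neg_one_sq, one_pow]
    simp only [Theta1, kappa2, kappa3]
    rw [sum_congr rfl fun k _ => neg_one_pow_mul_chi_two_mul_a hn0 k i,
      sum_Ico_pow_add_inv_pow_of_pow_eq_one (by omega) ht, ht_half,
      Nat.two_mul_div_two_of_even he, if_congr (zeta_pow_eq_one_iff hn0 he i).symm rfl rfl]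
    ring
end

section
/- For an odd positive integer r and the generalized quaternion group Q_ℓ (ℓ = 2^j ≥ 8) with virtual character Δ = 2ρ₀ − γ₁, the inner product ⟨Δ^r, ρ₀⟩ = ℓ^{-1} Σ_{g∈Q_ℓ} Δ(g)^r is an even integer. -/
open Complex Matrix

/-!
On `ξ^i` one has `Δ = 2 - ζ^i - ζ^{-i} = -ζ^{-i} (1 - ζ^i)^2`, and on the coset `J⟨ξ⟩` one has
`Δ = 2`. Expanding binomially and summing over `i` by orthogonality of the powers of `ζ` gives
`∑_g Δ(g)^r = (ℓ/2) (T + 2^r)` with `T = ∑_{k ≡ r mod ℓ/2} C(2r, k)`; all signs are `+1` because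
`ℓ/2` is even. The terms of `T` other than `C(2r, r)` pair up as `k ↔ 2r - k` with `k` odd, so each
pair is `2 C(2r, k) ≡ 0 mod 4`, and `C(2r, r) + 2^r ≡ 0 mod 4` for odd `r`. Hence
`⟨Δ^r, ρ₀⟩ = (T + 2^r)/2` is even.
-/

open Finset

theorem Nat.two_dvd_choose_two_mul_of_odd {r k : ℕ} (hk : Odd k) : 2 ∣ (2 * r).choose k := by
  obtain ⟨t, rfl⟩ := hk
  obtain rfl | hr := eq_or_ne r 0
  · exact (Nat.choose_zero_succ (2 * t)).symm ▸ dvd_zero 2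
  have key : (2 * r - 1 + 1) * (2 * r - 1).choose (2 * t) =
      (2 * r).choose (2 * t + 1) * (2 * t + 1) := by
    rw [Nat.add_one_mul_choose_eq, Nat.sub_add_cancel (by omega)]
  refine (Nat.coprime_two_left.mpr (odd_two_mul_add_one t)).dvd_of_dvd_mul_right ?_
  rw [← key, Nat.sub_add_cancel (by omega), mul_assoc]
  exact dvd_mul_right 2 _

theorem Nat.four_dvd_centralBinom_add_two_pow {r : ℕ} (hr : Odd r) :
    4 ∣ r.centralBinom + 2 ^ r := by
  obtain rfl | hr3 : r = 1 ∨ 3 ≤ r := by obtain ⟨t, rfl⟩ := hr; omega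
  · decide
  obtain ⟨s, rfl⟩ : ∃ s, r = s + 1 := ⟨r - 1, by omega⟩
  have hrec : 4 ∣ (s + 1) * (s + 1).centralBinom := by
    rw [Nat.succ_mul_centralBinom_succ, mul_comm 2, mul_assoc]
    exact (mul_dvd_mul_left 2 (two_dvd_centralBinom_of_one_le (n := s) (by omega))).mul_left _
  have hcop : Nat.Coprime (2 ^ 2) (s + 1) := (Nat.coprime_two_left.mpr hr).pow_left 2
  exact dvd_add (hcop.dvd_of_dvd_mul_left hrec) (pow_dvd_pow 2 (by omega : 2 ≤ s + 1))

theorem Nat.four_dvd_sum_choose_modEq_add_two_pow {N r : ℕ} (hN : Even N) (hr : Odd r) :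
    4 ∣ (∑ k ∈ range (2 * r + 1) with k ≡ r [MOD N], (2 * r).choose k) + 2 ^ r := by
  set S := {k ∈ range (2 * r + 1) | k ≡ r [MOD N]}
  have hmem {k : ℕ} : k ∈ S ↔ k ≤ 2 * r ∧ k ≡ r [MOD N] := by
    simp only [S, mem_filter, mem_range, Nat.lt_succ_iff]
  have hpairs : ∑ k ∈ S.erase r, ((2 * r).choose k : ZMod 4) = 0 := by
    refine sum_involution (fun k _ ↦ 2 * r - k) (fun k hk ↦ ?_) (fun k hk _ ↦ ?_)
      (fun k hk ↦ ?_) (fun k hk ↦ ?_)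
    · have hkS := mem_of_mem_erase hk
      have hr2 : r ≡ 1 [MOD 2] := Nat.odd_iff.mp hr
      have hodd : Odd k :=
        Nat.odd_iff.mpr (((hmem.mp hkS).2.of_dvd (even_iff_two_dvd.mp hN)).trans hr2)
      obtain ⟨c, hc⟩ := Nat.two_dvd_choose_two_mul_of_odd (r := r) hodd
      rw [Nat.choose_symm (hmem.mp hkS).1, hc, ← two_mul, Nat.cast_mul, ← mul_assoc]
      exact mul_eq_zero_of_left (by decide) _
    · have := (hmem.mp (mem_of_mem_erase hk)).1
      have := ne_of_mem_erase hk
      omega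
    · obtain ⟨hkr, hkS⟩ := mem_erase.mp hk
      obtain ⟨hk2r, hkmod⟩ := hmem.mp hkS
      refine mem_erase.mpr ⟨by omega, hmem.mpr ⟨by omega, Nat.ModEq.add_right_cancel' k ?_⟩⟩
      rw [Nat.sub_add_cancel hk2r, two_mul]
      exact Nat.ModEq.add_left r hkmod.symm
    · have := (hmem.mp (mem_of_mem_erase hk)).1
      omega
  rw [← ZMod.natCast_eq_zero_iff, Nat.cast_add, Nat.cast_sum,
    ← add_sum_erase S _ (hmem.mpr ⟨by omega, rfl⟩), hpairs, add_zero,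
    ← Nat.centralBinom_eq_two_mul_choose, ← Nat.cast_add, ZMod.natCast_eq_zero_iff]
  exact Nat.four_dvd_centralBinom_add_two_pow hr

theorem two_sub_sub_inv_pow {K : Type*} [Field K] {y : K} (hy : y ≠ 0) (r : ℕ) :
    (2 - y - y⁻¹) ^ r =
      ∑ k ∈ range (2 * r + 1), (-1) ^ (k + r) * ((2 * r).choose k : K) * y ^ ((k : ℤ) - r) := by
  have hsq : 2 - y - y⁻¹ = -1 * y⁻¹ * (-y + 1) ^ 2 := by field_simp; ring
  rw [hsq, mul_pow, mul_pow, ← pow_mul, add_pow, mul_sum]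
  refine sum_congr rfl fun k _ ↦ ?_
  rw [zpow_sub₀ hy, zpow_natCast, zpow_natCast, neg_pow, inv_pow]
  simp only [one_pow, mul_one, pow_add]
  ring

theorem IsPrimitiveRoot.sum_range_zpow_pow {K : Type*} [Field K] {ζ : K} {N : ℕ}
    (hζ : IsPrimitiveRoot ζ N) (c : ℤ) :
    ∑ i ∈ range N, (ζ ^ c) ^ i = if (N : ℤ) ∣ c then (N : K) else 0 := by
  split_ifs with hc
  · simp [(hζ.zpow_eq_one_iff_dvd c).mpr hc]
  · have hpow : (ζ ^ c) ^ N = 1 := by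
      rw [← zpow_natCast, ← _root_.zpow_mul, mul_comm, _root_.zpow_mul, zpow_natCast, hζ.pow_eq_one,
        _root_.one_zpow]
    rw [geom_sum_eq (mt (hζ.zpow_eq_one_iff_dvd c).mp hc), hpow, sub_self, zero_div]

theorem IsPrimitiveRoot.sum_range_two_sub_sub_inv_pow {K : Type*} [Field K] {ζ : K} {N : ℕ}
    (hζ : IsPrimitiveRoot ζ N) (hN : Even N) (r : ℕ) :
    ∑ i ∈ range N, (2 - ζ ^ i - (ζ ^ i)⁻¹) ^ r =
      N * ∑ k ∈ range (2 * r + 1) with k ≡ r [MOD N], ((2 * r).choose k : K) := by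
  obtain rfl | hN0 := eq_or_ne N 0
  · simp
  have hζ0 : ζ ≠ 0 := hζ.ne_zero hN0
  simp_rw [two_sub_sub_inv_pow (pow_ne_zero _ hζ0), ← zpow_natCast ζ,
    zpow_comm _ _ ((_ : ℤ) - _), zpow_natCast]
  rw [sum_comm, sum_filter, mul_sum]
  refine sum_congr rfl fun k _ ↦ ?_
  rw [← mul_sum, hζ.sum_range_zpow_pow]
  have hdvd : (N : ℤ) ∣ k - r ↔ k ≡ r [MOD N] := Nat.modEq_iff_dvd.symm.trans Nat.ModEq.comm
  simp only [hdvd]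
  split_ifs with hk
  · have hpar : k % 2 = r % 2 := hk.of_dvd (even_iff_two_dvd.mp hN)
    rw [(Nat.even_iff.mpr (by omega) : Even (k + r)).neg_one_pow]
    ring
  · simp

theorem zeta_isPrimitiveRoot (n : ℕ) [NeZero n] : IsPrimitiveRoot (zeta n) (2 * n) := by
  simpa [zeta] using Complex.isPrimitiveRoot_exp (2 * n) (NeZero.ne _)

theorem zeta_ne_zero (n : ℕ) : zeta n ≠ 0 := Complex.exp_ne_zero _

theorem Del_a (n : ℕ) (i : ZMod (2 * n)) :
    Del n (.a i) = 2 - zeta n ^ i.val - (zeta n ^ i.val)⁻¹ := by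
  rw [Del, det_fin_two]
  simp only [gam, one_mul, zpow_natCast, _root_.zpow_neg, Matrix.sub_apply, of_apply, cons_val',
    cons_val_zero, cons_val_one, cons_val_fin_one, one_apply_eq, one_apply_ne zero_ne_one]
  linear_combination mul_inv_cancel₀ (pow_ne_zero i.val (zeta_ne_zero n))

theorem Del_xa (n : ℕ) (i : ZMod (2 * n)) : Del n (.xa i) = 2 := by
  have hz : zeta n ^ i.val ≠ 0 := pow_ne_zero _ (zeta_ne_zero n)
  rw [Del, det_fin_two]
  norm_num [gam, hz]

theorem QuaternionGroup.sum_univ {M : Type*} [AddCommMonoid M] (n : ℕ) [NeZero n]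
    (f : QuaternionGroup n → M) : ∑ g, f g = ∑ i, f (a i) + ∑ i, f (xa i) :=
  let e : ZMod (2 * n) ⊕ ZMod (2 * n) ≃ QuaternionGroup n :=
    { toFun := Sum.elim a xa
      invFun := fun
        | .a i => .inl i
        | .xa i => .inr i
      left_inv := by rintro (i | i) <;> rfl
      right_inv := by rintro (i | i) <;> rfl }
  (e.sum_comp f).symm.trans (Fintype.sum_sum_type _)

theorem ZMod.sum_val {M : Type*} [AddCommMonoid M] (N : ℕ) [NeZero N] (f : ℕ → M) :
    ∑ i : ZMod N, f i.val = ∑ k ∈ range N, f k :=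
  sum_nbij' ZMod.val Nat.cast (fun i _ ↦ mem_range.mpr i.val_lt) (fun _ _ ↦ mem_univ _)
    (fun i _ ↦ ZMod.natCast_zmod_val i) (fun _ hk ↦ ZMod.val_cast_of_lt (mem_range.mp hk))
    (fun _ _ ↦ rfl)

theorem sum_Del_pow (n : ℕ) [NeZero n] (r : ℕ) :
    ∑ g, Del n g ^ r = 2 * n *
      ((∑ k ∈ range (2 * r + 1) with k ≡ r [MOD 2 * n], (2 * r).choose k) + 2 ^ r : ℕ) := by
  rw [QuaternionGroup.sum_univ]
  simp only [Del_a, Del_xa]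
  rw [ZMod.sum_val (2 * n) fun k ↦ (2 - zeta n ^ k - (zeta n ^ k)⁻¹) ^ r,
    (zeta_isPrimitiveRoot n).sum_range_two_sub_sub_inv_pow (even_two_mul n), sum_const, card_univ,
    ZMod.card, nsmul_eq_mul]
  push_cast
  ring

theorem stmt10_general (n : ℕ) [NeZero n] (r : ℕ) (hr : Odd r) :
    ∃ m : ℤ, (4 * n : ℂ)⁻¹ * ∑ g : QuaternionGroup n, Del n g ^ r = 2 * m := by
  obtain ⟨m, hm⟩ := Nat.four_dvd_sum_choose_modEq_add_two_pow (even_two_mul n) hr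
  refine ⟨m, ?_⟩
  have hn : (n : ℂ) ≠ 0 := Nat.cast_ne_zero.mpr (NeZero.ne n)
  rw [sum_Del_pow, hm]
  push_cast
  field_simp

/-- For odd positive r, ⟨Δ^r, ρ₀⟩ = ℓ⁻¹ Σ_{g ∈ Q_ℓ} Δ(g)^r is an even integer. -/
theorem stmt10 (j n : ℕ) [NeZero n] (hj : 3 ≤ j) (hn : 4 * n = 2 ^ j)
    (r : ℕ) (hr : Odd r) (hr' : 0 < r) :
    ∃ m : ℤ, (4 * n : ℂ)⁻¹ * ∑ g : QuaternionGroup n, Del n g ^ r = 2 * m :=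
  stmt10_general n r hr
end
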